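/- For small Λ-categories C, C', D there is a bijection, natural in C, C' and D, between the set Fun_Λ(C ⊗_ℕ C', D) of Λ-functors C ⊗_ℕ C' → D and the set Fun_Λ(C, IFun_Λ(C', D)) of Λ-functors from C to the Λ-category IFun_Λ(C', D) of Λ-functors C' → D; this exhibits the monoidal structure ⊗_ℕ on the category of small Λ-categories as closed. -/

import Mathlib

open CategoryTheory

/-- The `n`-fold composition power `(w_x)ⁿ` of the component of a natural transformation
`w : Id_C ⇒ Id_C` at `x`. -/
def wpow {C : Type} [SmallCategory C] (w : 𝟭 C ⟶ 𝟭 C) (x : C) : ℕ → (x ⟶ x)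
  | 0 => 𝟙 x
  | t + 1 => w.app x ≫ wpow w x t

theorem wpow_natural {C : Type} [SmallCategory C] (w : 𝟭 C ⟶ 𝟭 C) {x y : C}
    (f : x ⟶ y) (t : ℕ) : wpow w x t ≫ f = f ≫ wpow w y t := by
  induction t with
  | zero => simp [wpow]
  | succ t ih =>
    have h := w.naturality f
    simp only [Functor.id_map] at h
    simp only [wpow, Category.assoc, ih]
    rw [← Category.assoc, ← h, Category.assoc]

/-- The `ℕ`-action `t + f := f ∘ (w_x)ᵗ = (w_y)ᵗ ∘ f` on the Hom-sets of a `Λ`-category. -/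
def homAct {C : Type} [SmallCategory C] (w : 𝟭 C ⟶ 𝟭 C) {x y : C} (t : ℕ) (f : x ⟶ y) :
    x ⟶ y :=
  wpow w x t ≫ f

/-- A `Λ`-functor between `Λ`-categories: a functor commuting with the `Λ`-structures. -/
def IsLambdaFunctor {C D : Type} [SmallCategory C] [SmallCategory D]
    (w : 𝟭 C ⟶ 𝟭 C) (wD : 𝟭 D ⟶ 𝟭 D) (F : C ⥤ D) : Prop :=
  ∀ x : C, F.map (w.app x) = wD.app (F.obj x)

theorem map_wpow {C D : Type} [SmallCategory C] [SmallCategory D]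
    {w : 𝟭 C ⟶ 𝟭 C} {wD : 𝟭 D ⟶ 𝟭 D} {F : C ⥤ D} (hF : IsLambdaFunctor w wD F)
    (x : C) (t : ℕ) : F.map (wpow w x t) = wpow wD (F.obj x) t := by
  induction t with
  | zero => simp [wpow]
  | succ t ih => simp [wpow, ih, hF x]

theorem map_homAct {C D : Type} [SmallCategory C] [SmallCategory D]
    {w : 𝟭 C ⟶ 𝟭 C} {wD : 𝟭 D ⟶ 𝟭 D} {F : C ⥤ D} (hF : IsLambdaFunctor w wD F)
    {x y : C} (t : ℕ) (f : x ⟶ y) : F.map (homAct w t f) = homAct wD t (F.map f) := by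
  simp [homAct, map_wpow hF]

/-- Objects of the tensor product `Λ`-category `C ⊗_ℕ C'`: pairs of objects. -/
structure TensObj (C C' : Type) [SmallCategory C] [SmallCategory C']
    (w : 𝟭 C ⟶ 𝟭 C) (w' : 𝟭 C' ⟶ 𝟭 C') where
  fst : C
  snd : C'

variable {C C' : Type} [SmallCategory C] [SmallCategory C']

/-- The relation `(t + f, f') ∼ (f, t + f')` generating the tensor product of the `ℕ`-sets of
morphisms. -/
def trel (w : 𝟭 C ⟶ 𝟭 C) (w' : 𝟭 C' ⟶ 𝟭 C') {x y : C} {x' y' : C'} :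
    ((x ⟶ y) × (x' ⟶ y')) → ((x ⟶ y) × (x' ⟶ y')) → Prop := fun p q =>
  ∃ (t : ℕ) (f : x ⟶ y) (f' : x' ⟶ y'),
    p = (homAct w t f, f') ∧ q = (f, homAct w' t f')

/-- Hom-sets of the tensor product `Λ`-category:
`Hom((x,x'),(y,y')) = Hom(x,y) ⊗_ℕ Hom(x',y')`. -/
def THom {w : 𝟭 C ⟶ 𝟭 C} {w' : 𝟭 C' ⟶ 𝟭 C'} (X Y : TensObj C C' w w') : Type :=
  Quot (trel w w' (x := X.fst) (y := Y.fst) (x' := X.snd) (y' := Y.snd))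

/-- The class of a pair of morphisms in the tensor Hom-set. -/
def THom.mk {w : 𝟭 C ⟶ 𝟭 C} {w' : 𝟭 C' ⟶ 𝟭 C'} {X Y : TensObj C C' w w'}
    (f : X.fst ⟶ Y.fst) (f' : X.snd ⟶ Y.snd) : THom X Y :=
  Quot.mk _ (f, f')

/-- Composition in the tensor product `Λ`-category, induced by the `ℕ`-bilinearity of
composition. -/
def tcomp {w : 𝟭 C ⟶ 𝟭 C} {w' : 𝟭 C' ⟶ 𝟭 C'} {X Y Z : TensObj C C' w w'}
    (uf : THom X Y) (ug : THom Y Z) : THom X Z := by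
  refine Quot.lift (fun p => Quot.lift
      (fun q => THom.mk (p.1 ≫ q.1) (p.2 ≫ q.2)) ?_ ug) ?_ uf
  · rintro _ _ ⟨t, g, g', rfl, rfl⟩
    have e1 : p.1 ≫ homAct w t g = homAct w t (p.1 ≫ g) := by
      simp only [homAct, ← Category.assoc]
      rw [← wpow_natural]
    have e2 : p.2 ≫ homAct w' t g' = homAct w' t (p.2 ≫ g') := by
      simp only [homAct, ← Category.assoc]
      rw [← wpow_natural]
    show THom.mk _ _ = THom.mk _ _
    rw [e1, e2]
    exact Quot.sound ⟨t, p.1 ≫ g, p.2 ≫ g', rfl, rfl⟩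
  · rintro _ _ ⟨t, f, f', rfl, rfl⟩
    induction ug using Quot.ind with | _ q =>
    show THom.mk _ _ = THom.mk _ _
    have e1 : homAct w t f ≫ q.1 = homAct w t (f ≫ q.1) := by
      simp [homAct]
    have e2 : homAct w' t f' ≫ q.2 = homAct w' t (f' ≫ q.2) := by
      simp [homAct]
    rw [e1, e2]
    exact Quot.sound ⟨t, f ≫ q.1, f' ≫ q.2, rfl, rfl⟩

/-- The tensor product `Λ`-category `C ⊗_ℕ C'`. -/
instance tensCategory {w : 𝟭 C ⟶ 𝟭 C} {w' : 𝟭 C' ⟶ 𝟭 C'} :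
    Category (TensObj C C' w w') where
  Hom := THom
  id X := THom.mk (𝟙 X.fst) (𝟙 X.snd)
  comp := tcomp
  id_comp := by
    rintro X Y ⟨⟨f, f'⟩⟩
    show THom.mk _ _ = THom.mk _ _
    simp
  comp_id := by
    rintro X Y ⟨⟨f, f'⟩⟩
    show THom.mk _ _ = THom.mk _ _
    simp
  assoc := by
    rintro W X Y Z ⟨⟨f, f'⟩⟩ ⟨⟨g, g'⟩⟩ ⟨⟨h, h'⟩⟩
    show THom.mk _ _ = THom.mk _ _
    simp

/-- The `Λ`-structure `w_{(x,x')} = [w_x, id_{x'}] = [id_x, w'_{x'}]` of the tensor product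
`Λ`-category. -/
def tensW (w : 𝟭 C ⟶ 𝟭 C) (w' : 𝟭 C' ⟶ 𝟭 C') :
    𝟭 (TensObj C C' w w') ⟶ 𝟭 (TensObj C C' w w') where
  app X := THom.mk (w.app X.fst) (𝟙 X.snd)
  naturality := by
    rintro X Y ⟨⟨f, f'⟩⟩
    show THom.mk _ _ = THom.mk _ _
    have h := w.naturality f
    simp only [Functor.id_map] at h
    simp [h]

/-- The internal Hom `Λ`-category `IFun_Λ(C', D)`: objects are `Λ`-functors `C' → D`, morphisms
are all natural transformations. -/
abbrev LamFunCat {C' D : Type} [SmallCategory C'] [SmallCategory D]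
    (w' : 𝟭 C' ⟶ 𝟭 C') (wD : 𝟭 D ⟶ 𝟭 D) :=
  CategoryTheory.ObjectProperty.FullSubcategory (IsLambdaFunctor w' wD)

/-- The `Λ`-structure `(1 + η)_x = w_{G(x)} ∘ η_x` on `IFun_Λ(C', D)`; its component at a
`Λ`-functor `F` is the natural transformation with components `w_{F(x)}`. -/
def ifunW {C' D : Type} [SmallCategory C'] [SmallCategory D]
    (w' : 𝟭 C' ⟶ 𝟭 C') (wD : 𝟭 D ⟶ 𝟭 D) :
    𝟭 (LamFunCat w' wD) ⟶ 𝟭 (LamFunCat w' wD) where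
  app F := ObjectProperty.homMk
    { app := fun x => wD.app (F.obj.obj x)
      naturality := fun x y f => by simpa using wD.naturality (F.obj.map f) }
  naturality F G η := by
    apply ObjectProperty.hom_ext
    apply NatTrans.ext
    funext x
    simpa using wD.naturality (η.hom.app x)

/-- The functor `u ⊗ id : C₀ ⊗_ℕ C' → C ⊗_ℕ C'` induced by a `Λ`-functor `u : C₀ → C`. -/
def tensMapL {C0 : Type} [SmallCategory C0] {w0 : 𝟭 C0 ⟶ 𝟭 C0} {w : 𝟭 C ⟶ 𝟭 C}
    (w' : 𝟭 C' ⟶ 𝟭 C') (u : C0 ⥤ C) (hu : IsLambdaFunctor w0 w u) :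
    TensObj C0 C' w0 w' ⥤ TensObj C C' w w' where
  obj X := ⟨u.obj X.fst, X.snd⟩
  map {X Y} := Quot.map (fun p => (u.map p.1, p.2)) (by
    rintro _ _ ⟨t, f, f', rfl, rfl⟩
    exact ⟨t, u.map f, f', by simp [map_homAct hu], rfl⟩)
  map_id X := by
    show THom.mk _ _ = THom.mk _ _
    simp
  map_comp := by
    rintro X Y Z ⟨⟨f, f'⟩⟩ ⟨⟨g, g'⟩⟩
    show THom.mk _ _ = THom.mk _ _
    simp

/-- The functor `id ⊗ v : C ⊗_ℕ C₀' → C ⊗_ℕ C'` induced by a `Λ`-functor `v : C₀' → C'`. -/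
def tensMapR {C0' : Type} [SmallCategory C0'] {w0' : 𝟭 C0' ⟶ 𝟭 C0'} {w' : 𝟭 C' ⟶ 𝟭 C'}
    (w : 𝟭 C ⟶ 𝟭 C) (v : C0' ⥤ C') (hv : IsLambdaFunctor w0' w' v) :
    TensObj C C0' w w0' ⥤ TensObj C C' w w' where
  obj X := ⟨X.fst, v.obj X.snd⟩
  map {X Y} := Quot.map (fun p => (p.1, v.map p.2)) (by
    rintro _ _ ⟨t, f, f', rfl, rfl⟩
    exact ⟨t, f, v.map f', rfl, by simp [map_homAct hv]⟩)
  map_id X := by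
    show THom.mk _ _ = THom.mk _ _
    simp
  map_comp := by
    rintro X Y Z ⟨⟨f, f'⟩⟩ ⟨⟨g, g'⟩⟩
    show THom.mk _ _ = THom.mk _ _
    simp

/-- Postcomposition `IFun_Λ(C', D) → IFun_Λ(C', E)` with a `Λ`-functor `K : D → E`. -/
def ifunPost {D E : Type} [SmallCategory D] [SmallCategory E]
    (w' : 𝟭 C' ⟶ 𝟭 C') {wD : 𝟭 D ⟶ 𝟭 D} {wE : 𝟭 E ⟶ 𝟭 E}
    (K : D ⥤ E) (hK : IsLambdaFunctor wD wE K) :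
    LamFunCat w' wD ⥤ LamFunCat w' wE where
  obj F := ⟨F.obj ⋙ K, fun x => by
    show K.map (F.obj.map (w'.app x)) = _
    rw [F.property x, hK]
    rfl⟩
  map η := ObjectProperty.homMk (Functor.whiskerRight η.hom K)
  map_id := by
    intros; apply ObjectProperty.hom_ext; apply NatTrans.ext; funext x
    simp
  map_comp := by
    intros; apply ObjectProperty.hom_ext; apply NatTrans.ext; funext x
    simp

/-- Precomposition `IFun_Λ(C', D) → IFun_Λ(C₀', D)` with a `Λ`-functor `v : C₀' → C'`. -/
def ifunPre {C0' D : Type} [SmallCategory C0'] [SmallCategory D]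
    {w0' : 𝟭 C0' ⟶ 𝟭 C0'} {w' : 𝟭 C' ⟶ 𝟭 C'}
    (v : C0' ⥤ C') (hv : IsLambdaFunctor w0' w' v) (wD : 𝟭 D ⟶ 𝟭 D) :
    LamFunCat w' wD ⥤ LamFunCat w0' wD where
  obj F := ⟨v ⋙ F.obj, fun x => by
    show F.obj.map (v.map (w0'.app x)) = _
    rw [hv x, F.property]
    rfl⟩
  map η := ObjectProperty.homMk (Functor.whiskerLeft v η.hom)
  map_id := by
    intros; apply ObjectProperty.hom_ext; apply NatTrans.ext; funext x
    simp
  map_comp := by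
    intros; apply ObjectProperty.hom_ext; apply NatTrans.ext; funext x
    simp

/-!
`C ⊗_ℕ C'` is the quotient of `C × C'` by the relation `(t + f, f') ∼ (f, t + f')`, so functors
out of it are the functors out of `C × C'` that are balanced for the two `ℕ`-actions. Ordinary
currying `(C × C' ⥤ D) ≃ (C ⥤ C' ⥤ D)` then restricts to `Λ`-functors: since the `Λ`-structure of
`IFun_Λ(C', D)` acts componentwise, the curried functor is a `Λ`-functor exactly when the
uncurried one sends `[w_x, id]` to `w_D`, and the identity `[w_x, id] = [id, w'_{x'}]` makes each
partial functor a `Λ`-functor; conversely, balancedness of the uncurried functor follows from the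
bilinearity of composition. Naturality in the three variables is inherited from currying.
-/

theorem CategoryTheory.ObjectProperty.functor_ext_of_comp_ι {A B : Type*} [Category* A]
    [Category* B] {P : ObjectProperty A} {G₁ G₂ : B ⥤ P.FullSubcategory}
    (h : G₁ ⋙ P.ι = G₂ ⋙ P.ι) : G₁ = G₂ := by
  -- a functor into a full subcategory is definitionally the lift of its composite with `ι`
  change P.lift (G₁ ⋙ P.ι) (fun X => (G₁.obj X).2) = P.lift (G₂ ⋙ P.ι) (fun X => (G₂.obj X).2)
  congr

theorem CategoryTheory.Functor.curry_obj_prod_comp {A A₀ B B₀ E : Type*} [Category* A]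
    [Category* A₀] [Category* B] [Category* B₀] [Category* E]
    (u : A₀ ⥤ A) (v : B₀ ⥤ B) (H : A × B ⥤ E) :
    curry.obj (u.prod v ⋙ H) = u ⋙ curry.obj H ⋙ (whiskeringLeft _ _ _).obj v :=
  calc curry.obj (u.prod v ⋙ H)
      _ = curry.obj (u.prod v ⋙ uncurry.obj (curry.obj H)) := by rw [uncurry_obj_curry_obj]
      _ = curry.obj (uncurry.obj (u ⋙ curry.obj H ⋙ (whiskeringLeft _ _ _).obj v)) := rfl
      _ = _ := curry_obj_uncurry_obj _

theorem homAct_comp {w : 𝟭 C ⟶ 𝟭 C} {x y z : C} (t : ℕ) (f : x ⟶ y) (g : y ⟶ z) :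
    homAct w t f ≫ g = homAct w t (f ≫ g) :=
  Category.assoc _ _ _

theorem comp_homAct {w : 𝟭 C ⟶ 𝟭 C} {x y z : C} (t : ℕ) (f : x ⟶ y) (g : y ⟶ z) :
    f ≫ homAct w t g = homAct w t (f ≫ g) := by
  rw [homAct, homAct, ← Category.assoc, ← wpow_natural, Category.assoc]

section Currying

variable {D : Type} [SmallCategory D] {w : 𝟭 C ⟶ 𝟭 C} {w' : 𝟭 C' ⟶ 𝟭 C'} {wD : 𝟭 D ⟶ 𝟭 D}

variable (w w') in
def tensQuot : C × C' ⥤ TensObj C C' w w' where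
  obj p := ⟨p.1, p.2⟩
  map f := THom.mk f.1 f.2

theorem tensW_app_eq_mk_id (x : C) (x' : C') :
    (tensW w w').app ⟨x, x'⟩ = THom.mk (𝟙 x) (w'.app x') :=
  Quot.sound ⟨1, 𝟙 x, 𝟙 x', by simp [homAct, wpow], by simp [homAct, wpow]⟩

theorem tensFunctor_ext {F₁ F₂ : TensObj C C' w w' ⥤ D}
    (h : tensQuot w w' ⋙ F₁ = tensQuot w w' ⋙ F₂) : F₁ = F₂ := by
  refine CategoryTheory.Functor.ext (fun X => Functor.congr_obj h ((X.fst, X.snd) : C × C')) ?_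
  rintro X Y ⟨p⟩
  exact Functor.congr_hom h (X := (X.fst, X.snd)) (Y := (Y.fst, Y.snd)) p

variable (w w') in
def IsBalanced (H : C × C' ⥤ D) : Prop :=
  ∀ {x y : C} {x' y' : C'} (t : ℕ) (f : x ⟶ y) (f' : x' ⟶ y'),
    H.map ((homAct w t f, f') : (x, x') ⟶ (y, y')) = H.map ((f, homAct w' t f') : (x, x') ⟶ (y, y'))

def tensLift (H : C × C' ⥤ D) (hH : IsBalanced w w' H) : TensObj C C' w w' ⥤ D where
  obj X := H.obj (X.fst, X.snd)
  map {X Y} := Quot.lift (fun p : (X.fst, X.snd) ⟶ (Y.fst, Y.snd) => H.map p) <| by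
    rintro _ _ ⟨t, f, f', rfl, rfl⟩
    exact hH t f f'
  map_id X := H.map_id (X.fst, X.snd)
  map_comp := by
    rintro X Y Z ⟨p⟩ ⟨q⟩
    exact H.map_comp (X := (X.fst, X.snd)) (Y := (Y.fst, Y.snd)) (Z := (Z.fst, Z.snd)) p q

theorem tensQuot_comp_tensLift (H : C × C' ⥤ D) (hH : IsBalanced w w' H) :
    tensQuot w w' ⋙ tensLift H hH = H :=
  rfl

theorem ifunW_wpow_app (G : LamFunCat w' wD) (t : ℕ) (x' : C') :
    (wpow (ifunW w' wD) G t).hom.app x' = wpow wD (G.obj.obj x') t := by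
  induction t with
  | zero => rfl
  | succ t ih => exact congrArg (wD.app _ ≫ ·) ih

theorem ifunW_homAct_app {G H : LamFunCat w' wD} (t : ℕ) (η : G ⟶ H) (x' : C') :
    (homAct (ifunW w' wD) t η).hom.app x' = homAct wD t (η.hom.app x') := by
  rw [homAct, homAct, ObjectProperty.FullSubcategory.comp_hom, NatTrans.comp_app, ifunW_wpow_app]

theorem isLambdaFunctor_curry_obj {F : TensObj C C' w w' ⥤ D}
    (hF : IsLambdaFunctor (tensW w w') wD F) (x : C) :
    IsLambdaFunctor w' wD ((Functor.curry.obj (tensQuot w w' ⋙ F)).obj x) := fun x' => by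
  change F.map (THom.mk (X := ⟨x, x'⟩) (Y := ⟨x, x'⟩) (𝟙 x) (w'.app x')) = _
  rw [← tensW_app_eq_mk_id]
  exact hF _

def curryFun (F : TensObj C C' w w' ⥤ D) (hF : IsLambdaFunctor (tensW w w') wD F) :
    C ⥤ LamFunCat w' wD :=
  ObjectProperty.lift _ (Functor.curry.obj (tensQuot w w' ⋙ F)) (isLambdaFunctor_curry_obj hF)

theorem isLambdaFunctor_curryFun {F : TensObj C C' w w' ⥤ D}
    (hF : IsLambdaFunctor (tensW w w') wD F) :
    IsLambdaFunctor w (ifunW w' wD) (curryFun F hF) := fun x =>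
  ObjectProperty.hom_ext _ (NatTrans.ext (funext fun x' => hF ⟨x, x'⟩))

theorem isBalanced_uncurry_obj {G : C ⥤ LamFunCat w' wD}
    (hG : IsLambdaFunctor w (ifunW w' wD) G) :
    IsBalanced w w' (Functor.uncurry.obj (G ⋙ ObjectProperty.ι _)) := fun {x y x' _} t f f' =>
  calc (G.map (homAct w t f)).hom.app x' ≫ (G.obj y).obj.map f'
      _ = homAct wD t ((G.map f).hom.app x') ≫ (G.obj y).obj.map f' := by
        rw [map_homAct hG, ifunW_homAct_app]
      _ = (G.map f).hom.app x' ≫ homAct wD t ((G.obj y).obj.map f') := by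
        rw [homAct_comp, comp_homAct]
      _ = (G.map f).hom.app x' ≫ (G.obj y).obj.map (homAct w' t f') := by
        rw [map_homAct (G.obj y).property]

def uncurryFun (G : C ⥤ LamFunCat w' wD) (hG : IsLambdaFunctor w (ifunW w' wD) G) :
    TensObj C C' w w' ⥤ D :=
  tensLift _ (isBalanced_uncurry_obj hG)

theorem isLambdaFunctor_uncurryFun {G : C ⥤ LamFunCat w' wD}
    (hG : IsLambdaFunctor w (ifunW w' wD) G) :
    IsLambdaFunctor (tensW w w') wD (uncurryFun G hG) := fun X => by
  change (G.map (w.app X.fst)).hom.app X.snd ≫ (G.obj X.fst).obj.map (𝟙 X.snd) =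
    wD.app ((G.obj X.fst).obj.obj X.snd)
  rw [hG, (G.obj X.fst).obj.map_id]
  exact Category.comp_id _

theorem uncurryFun_curryFun (F : TensObj C C' w w' ⥤ D)
    (hF : IsLambdaFunctor (tensW w w') wD F) :
    uncurryFun (curryFun F hF) (isLambdaFunctor_curryFun hF) = F :=
  tensFunctor_ext <|
    (tensQuot_comp_tensLift _ _).trans (Functor.uncurry_obj_curry_obj (tensQuot w w' ⋙ F))

theorem curryFun_uncurryFun (G : C ⥤ LamFunCat w' wD) (hG : IsLambdaFunctor w (ifunW w' wD) G) :
    curryFun (uncurryFun G hG) (isLambdaFunctor_uncurryFun hG) = G :=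
  ObjectProperty.functor_ext_of_comp_ι <|
    (congrArg Functor.curry.obj (tensQuot_comp_tensLift _ _)).trans
      (Functor.curry_obj_uncurry_obj _)

def curryEquiv :
    {F : TensObj C C' w w' ⥤ D // IsLambdaFunctor (tensW w w') wD F} ≃
      {G : C ⥤ LamFunCat w' wD // IsLambdaFunctor w (ifunW w' wD) G} where
  toFun F := ⟨curryFun F.1 F.2, isLambdaFunctor_curryFun F.2⟩
  invFun G := ⟨uncurryFun G.1 G.2, isLambdaFunctor_uncurryFun G.2⟩
  left_inv F := Subtype.ext (uncurryFun_curryFun F.1 F.2)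
  right_inv G := Subtype.ext (curryFun_uncurryFun G.1 G.2)

theorem curryFun_comp {E : Type} [SmallCategory E] {wE : 𝟭 E ⟶ 𝟭 E} {K : D ⥤ E}
    (hK : IsLambdaFunctor wD wE K) {F : TensObj C C' w w' ⥤ D}
    (hF : IsLambdaFunctor (tensW w w') wD F) (hFK : IsLambdaFunctor (tensW w w') wE (F ⋙ K)) :
    curryFun (F ⋙ K) hFK = curryFun F hF ⋙ ifunPost w' K hK :=
  rfl

theorem curryFun_tensMapL_comp {C₀ : Type} [SmallCategory C₀] {w₀ : 𝟭 C₀ ⟶ 𝟭 C₀} {u : C₀ ⥤ C}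
    (hu : IsLambdaFunctor w₀ w u) {F : TensObj C C' w w' ⥤ D}
    (hF : IsLambdaFunctor (tensW w w') wD F)
    (hF₀ : IsLambdaFunctor (tensW w₀ w') wD (tensMapL w' u hu ⋙ F)) :
    curryFun (tensMapL w' u hu ⋙ F) hF₀ = u ⋙ curryFun F hF :=
  ObjectProperty.functor_ext_of_comp_ι (Functor.curry_obj_prod_comp u (𝟭 C') (tensQuot w w' ⋙ F))

theorem curryFun_tensMapR_comp {C₀' : Type} [SmallCategory C₀'] {w₀' : 𝟭 C₀' ⟶ 𝟭 C₀'}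
    {v : C₀' ⥤ C'} (hv : IsLambdaFunctor w₀' w' v) {F : TensObj C C' w w' ⥤ D}
    (hF : IsLambdaFunctor (tensW w w') wD F)
    (hF₀ : IsLambdaFunctor (tensW w w₀') wD (tensMapR w v hv ⋙ F)) :
    curryFun (tensMapR w v hv ⋙ F) hF₀ = curryFun F hF ⋙ ifunPre v hv wD :=
  ObjectProperty.functor_ext_of_comp_ι (Functor.curry_obj_prod_comp (𝟭 C) v (tensQuot w w' ⋙ F))

end Currying

/-- For small `Λ`-categories `C, C', D` there is a bijection, natural in `C`,
`C'` and `D`, between the set of `Λ`-functors `C ⊗_ℕ C' → D` and the set of `Λ`-functors from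
`C` to the `Λ`-category `IFun_Λ(C', D)` of `Λ`-functors `C' → D`; this exhibits the monoidal
structure `⊗_ℕ` on small `Λ`-categories as closed.  (Naturality is expressed by compatibility
with pre- and postcomposition by `Λ`-functors in each of the three variables.) -/
theorem lambda_tensor_hom_adjunction :
    ∃ e : ∀ (C C' D : Type) [SmallCategory C] [SmallCategory C'] [SmallCategory D]
        (w : 𝟭 C ⟶ 𝟭 C) (w' : 𝟭 C' ⟶ 𝟭 C') (wD : 𝟭 D ⟶ 𝟭 D),
        {F : TensObj C C' w w' ⥤ D // IsLambdaFunctor (tensW w w') wD F} ≃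
        {F : C ⥤ LamFunCat w' wD // IsLambdaFunctor w (ifunW w' wD) F},
      -- naturality in the third variable `D`
      (∀ (C C' D E : Type) [SmallCategory C] [SmallCategory C'] [SmallCategory D]
        [SmallCategory E]
        (w : 𝟭 C ⟶ 𝟭 C) (w' : 𝟭 C' ⟶ 𝟭 C') (wD : 𝟭 D ⟶ 𝟭 D) (wE : 𝟭 E ⟶ 𝟭 E)
        (K : D ⥤ E) (hK : IsLambdaFunctor wD wE K)
        (F : {F : TensObj C C' w w' ⥤ D // IsLambdaFunctor (tensW w w') wD F})
        (F' : {F : TensObj C C' w w' ⥤ E // IsLambdaFunctor (tensW w w') wE F}),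
        F'.val = F.val ⋙ K →
          (e C C' E w w' wE F').val = (e C C' D w w' wD F).val ⋙ ifunPost w' K hK) ∧
      -- naturality in the first variable `C`
      (∀ (C0 C C' D : Type) [SmallCategory C0] [SmallCategory C] [SmallCategory C']
        [SmallCategory D]
        (w0 : 𝟭 C0 ⟶ 𝟭 C0) (w : 𝟭 C ⟶ 𝟭 C) (w' : 𝟭 C' ⟶ 𝟭 C') (wD : 𝟭 D ⟶ 𝟭 D)
        (u : C0 ⥤ C) (hu : IsLambdaFunctor w0 w u)
        (F : {F : TensObj C C' w w' ⥤ D // IsLambdaFunctor (tensW w w') wD F})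
        (F0 : {F : TensObj C0 C' w0 w' ⥤ D // IsLambdaFunctor (tensW w0 w') wD F}),
        F0.val = tensMapL w' u hu ⋙ F.val →
          (e C0 C' D w0 w' wD F0).val = u ⋙ (e C C' D w w' wD F).val) ∧
      -- naturality in the second variable `C'`
      (∀ (C C0' C' D : Type) [SmallCategory C] [SmallCategory C0'] [SmallCategory C']
        [SmallCategory D]
        (w : 𝟭 C ⟶ 𝟭 C) (w0' : 𝟭 C0' ⟶ 𝟭 C0') (w' : 𝟭 C' ⟶ 𝟭 C') (wD : 𝟭 D ⟶ 𝟭 D)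
        (v : C0' ⥤ C') (hv : IsLambdaFunctor w0' w' v)
        (F : {F : TensObj C C' w w' ⥤ D // IsLambdaFunctor (tensW w w') wD F})
        (F0 : {F : TensObj C C0' w w0' ⥤ D // IsLambdaFunctor (tensW w w0') wD F}),
        F0.val = tensMapR w v hv ⋙ F.val →
          (e C C0' D w w0' wD F0).val = (e C C' D w w' wD F).val ⋙ ifunPre v hv wD) := by
  refine ⟨fun _ _ _ _ _ _ _ _ _ => curryEquiv, ?_, ?_, ?_⟩
  · rintro C C' D E _ _ _ _ w w' wD wE K hK ⟨F, hF⟩ ⟨_, hFK⟩ rfl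
    exact curryFun_comp hK hF hFK
  · rintro C0 C C' D _ _ _ _ w0 w w' wD u hu ⟨F, hF⟩ ⟨_, hF0⟩ rfl
    exact curryFun_tensMapL_comp hu hF hF0
  · rintro C C0' C' D _ _ _ _ w w0' w' wD v hv ⟨F, hF⟩ ⟨_, hF0⟩ rfl
    exact curryFun_tensMapR_comp hv hF hF0
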